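/- arXiv:1610.01859 — 5 statements merged into one kernel-verified Lean document; each statement's English description precedes it below -/
import Mathlib

section
/- Let P(x) be an n×n matrix polynomial of degree k with invertible leading coefficient, and v(x) a scalar polynomial. Write v(x)·I = A(x)P(x) + Q(x) with deg Q ≤ k-1 (left division) and v(x)·I = P(x)B(x) + S(x) with deg S ≤ k-1 (right division). Then A(x) = B(x) and P(x)Q(x) = S(x)P(x). -/
open Polynomial

lemma commute_C_of_central {R : Type*} [Semiring R] (a : R) (h : ∀ b, Commute a b)
    (q : Polynomial R) : Commute (Polynomial.C a) q := by
  induction q using Polynomial.induction_on' with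
  | add p r hp hr => exact hp.add_right hr
  | monomial j b =>
      rw [← Polynomial.C_mul_X_pow_eq_monomial]
      have h1 : Commute (Polynomial.C a) (Polynomial.C b) := by
        unfold Commute SemiconjBy
        rw [← Polynomial.C_mul, ← Polynomial.C_mul, (h b).eq]
      exact h1.mul_right (Polynomial.commute_X_pow _ j).symm

/-- A scalar polynomial mapped into a matrix polynomial ring commutes with everything. -/
lemma scalar_poly_commute {F : Type*} [Field F] {n : ℕ} (v : Polynomial F)
    (q : Polynomial (Matrix (Fin n) (Fin n) F)) :
    Commute (v.map (algebraMap F (Matrix (Fin n) (Fin n) F))) q := by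
  induction v using Polynomial.induction_on' with
  | add p r hp hr => rw [Polynomial.map_add]; exact hp.add_left hr
  | monomial i a =>
      rw [Polynomial.map_monomial, ← Polynomial.C_mul_X_pow_eq_monomial]
      exact (commute_C_of_central _ (fun r => Algebra.commutes a r) q).mul_left
        (Polynomial.commute_X_pow q i)

/-- For a matrix polynomial P of degree k with invertible leading
coefficient and a scalar polynomial v, writing v·I = A·P + Q (left division) and
v·I = P·B + S (right division) with deg Q, deg S ≤ k-1, one has A = B and PQ = SP. -/
theorem left_right_quotients_coincide {F : Type*} [Field F] {n : ℕ} (k : ℕ)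
    (P A B Q S : Polynomial (Matrix (Fin n) (Fin n) F)) (v : Polynomial F)
    (hP : P.degree = (k : ℕ)) (hu : IsUnit P.leadingCoeff)
    (hQ : v.map (algebraMap F (Matrix (Fin n) (Fin n) F)) = A * P + Q)
    (hdQ : Q.degree < (k : ℕ))
    (hS : v.map (algebraMap F (Matrix (Fin n) (Fin n) F)) = P * B + S)
    (hdS : S.degree < (k : ℕ)) :
    A = B ∧ P * Q = S * P := by
  have hcomm := scalar_poly_commute v P
  have hulz : ∀ x, P.leadingCoeff * x = 0 → x = 0 := fun x hx =>
    (hu.mul_right_eq_zero).mp hx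
  have hurz : ∀ x, x * P.leadingCoeff = 0 → x = 0 := fun x hx =>
    (hu.mul_left_eq_zero).mp hx
  have key : P * (A - B) * P = S * P - P * Q := by
    have h1 : P * (A * P + Q) = (P * B + S) * P := by
      rw [← hQ, ← hS]; exact hcomm.symm.eq
    rw [mul_add, ← mul_assoc, add_mul] at h1
    rw [mul_sub, sub_mul, sub_eq_sub_iff_add_eq_add, h1, add_comm]
  have hAB : A = B := by
    by_contra hne
    have hC : A - B ≠ 0 := sub_ne_zero.mpr hne
    have hClead : (A - B).leadingCoeff ≠ 0 := Polynomial.leadingCoeff_ne_zero.mpr hC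
    have h1 : P.leadingCoeff * (A - B).leadingCoeff ≠ 0 := fun h => hClead (hulz _ h)
    have hdeg1 : (P * (A - B)).degree = P.degree + (A - B).degree :=
      Polynomial.degree_mul' h1
    have hlead1 : (P * (A - B)).leadingCoeff = P.leadingCoeff * (A - B).leadingCoeff :=
      Polynomial.leadingCoeff_mul' h1
    have h2 : (P * (A - B)).leadingCoeff * P.leadingCoeff ≠ 0 := by
      rw [hlead1]
      intro h
      exact h1 (hurz _ h)
    have hdeg2 : (P * (A - B) * P).degree = P.degree + (A - B).degree + P.degree := by
      rw [Polynomial.degree_mul' h2, hdeg1]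
    have hlb : ((k : ℕ) + (k : ℕ) : WithBot ℕ) ≤ (P * (A - B) * P).degree := by
      rw [hdeg2, hP]
      have h0 : (0 : WithBot ℕ) ≤ (A - B).degree :=
        Polynomial.zero_le_degree_iff.mpr hC
      calc ((k : ℕ) + (k : ℕ) : WithBot ℕ) = (k : ℕ) + 0 + (k : ℕ) := by
            rw [add_zero]
        _ ≤ (k : ℕ) + (A - B).degree + (k : ℕ) := by gcongr
    have hub : (S * P - P * Q).degree < ((k : ℕ) + (k : ℕ) : WithBot ℕ) := by
      apply lt_of_le_of_lt (Polynomial.degree_sub_le _ _)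
      apply max_lt
      · apply lt_of_le_of_lt (Polynomial.degree_mul_le _ _)
        rw [hP]
        exact WithBot.add_lt_add_right (by simp) hdS
      · apply lt_of_le_of_lt (Polynomial.degree_mul_le _ _)
        rw [hP]
        exact WithBot.add_lt_add_left (by simp) hdQ
    rw [← key] at hub
    exact absurd hub (not_lt.mpr hlb)
  refine ⟨hAB, ?_⟩
  have h3 : P * (A - B) * P = S * P - P * Q := key
  rw [hAB, sub_self, mul_zero, zero_mul] at h3
  exact (sub_eq_zero.mp h3.symm).symm
end

section
/- Let P(x) be an n×n matrix polynomial over a field F and let F(x,y) be a bivariate n×n matrix polynomial satisfying the left and right shift-sum relations F(x,y)x + G(x,y) = v(y)P(x) and yF(x,y) + G(x,y) = P(y)v(x) for a scalar polynomial v (the same v in both relations). Then F(x,y) = F(y,x) and G(x,y) = G(y,x), i.e., the solutions are symmetric under swapping x and y. -/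
open MvPolynomial

lemma swap_rename_aux {F : Type*} [Field F]
    (σ : MvPolynomial (Fin 2) F →ₐ[F] MvPolynomial (Fin 2) F)
    (hσ : σ = rename (Equiv.swap (0 : Fin 2) 1)) (v : Polynomial F) :
    σ (Polynomial.aeval (X 0 : MvPolynomial (Fin 2) F) v)
      = Polynomial.aeval (X 1 : MvPolynomial (Fin 2) F) v ∧
    σ (Polynomial.aeval (X 1 : MvPolynomial (Fin 2) F) v)
      = Polynomial.aeval (X 0 : MvPolynomial (Fin 2) F) v := by
  subst hσ
  constructor <;>
  · rw [← Polynomial.aeval_algHom_apply]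
    simp [rename_X]

/-- If F(x,y), G(x,y) satisfy F(x,y)x + G(x,y) = v(y)P(x) and
yF(x,y) + G(x,y) = P(y)v(x) for a scalar polynomial v, then F and G are
symmetric under swapping x and y. -/
theorem DL_block_symmetric {F : Type*} [Field F] {n : ℕ}
    (P : Matrix (Fin n) (Fin n) (Polynomial F)) (v : Polynomial F)
    (Fm Gm : Matrix (Fin n) (Fin n) (MvPolynomial (Fin 2) F))
    (h1 : (X 0 : MvPolynomial (Fin 2) F) • Fm + Gm =
      (Polynomial.aeval (X 1 : MvPolynomial (Fin 2) F) v) •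
        P.map (fun q => Polynomial.aeval (X 0 : MvPolynomial (Fin 2) F) q))
    (h2 : (X 1 : MvPolynomial (Fin 2) F) • Fm + Gm =
      (Polynomial.aeval (X 0 : MvPolynomial (Fin 2) F) v) •
        P.map (fun q => Polynomial.aeval (X 1 : MvPolynomial (Fin 2) F) q)) :
    Fm.map (fun q => rename (Equiv.swap (0 : Fin 2) 1) q) = Fm ∧
      Gm.map (fun q => rename (Equiv.swap (0 : Fin 2) 1) q) = Gm := by
  set σ : MvPolynomial (Fin 2) F →ₐ[F] MvPolynomial (Fin 2) F :=
    rename (Equiv.swap (0 : Fin 2) 1) with hσ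
  have hσ0 : σ (X 0) = X 1 := by simp [hσ, rename_X]
  have hσ1 : σ (X 1) = X 0 := by simp [hσ, rename_X]
  have hne : (X 1 - X 0 : MvPolynomial (Fin 2) F) ≠ 0 := by
    intro h
    have := sub_eq_zero.mp h
    exact absurd (MvPolynomial.X_injective this) (by decide)
  have key : ∀ i j : Fin n, σ (Fm i j) = Fm i j := by
    intro i j
    have e1 := congrFun (congrFun h1 i) j
    have e2 := congrFun (congrFun h2 i) j
    simp only [Matrix.add_apply, Matrix.smul_apply, Matrix.map_apply,
      smul_eq_mul] at e1 e2
    have hsub : (X 1 - X 0 : MvPolynomial (Fin 2) F) * Fm i j =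
        Polynomial.aeval (X 0 : MvPolynomial (Fin 2) F) v *
          Polynomial.aeval (X 1 : MvPolynomial (Fin 2) F) (P i j) -
        Polynomial.aeval (X 1 : MvPolynomial (Fin 2) F) v *
          Polynomial.aeval (X 0 : MvPolynomial (Fin 2) F) (P i j) := by
      rw [sub_mul]; linear_combination e2 - e1
    have hv := swap_rename_aux σ hσ v
    have hp := swap_rename_aux σ hσ (P i j)
    have hsub2 := congrArg σ hsub
    simp only [map_mul, map_sub, hσ0, hσ1, hv.1, hv.2, hp.1, hp.2] at hsub2
    have : (X 1 - X 0 : MvPolynomial (Fin 2) F) * σ (Fm i j) =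
        (X 1 - X 0) * Fm i j := by
      rw [hsub]; linear_combination -hsub2
    exact mul_left_cancel₀ hne this
  have hF : Fm.map (fun q => rename (Equiv.swap (0 : Fin 2) 1) q) = Fm :=
    Matrix.ext fun i j => key i j
  refine ⟨hF, Matrix.ext fun i j => ?_⟩
  have e1 := congrFun (congrFun h1 i) j
  have e2 := congrFun (congrFun h2 i) j
  simp only [Matrix.add_apply, Matrix.smul_apply, Matrix.map_apply,
    smul_eq_mul] at e1 e2 ⊢
  have hv := swap_rename_aux σ hσ v
  have hp := swap_rename_aux σ hσ (P i j)
  have := congrArg σ e1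
  simp only [map_add, map_mul, hσ0, hv.1, hv.2, hp.1, hp.2, key i j] at this
  -- this : X 1 * Fm i j + σ (Gm i j) = aeval (X 0) v * aeval (X 1) (P i j)
  have : σ (Gm i j) = Gm i j := by linear_combination this - e2
  exact this
end

section
/- Let U be an invertible upper-triangular Toeplitz matrix over a (possibly noncommutative) ring with unity, and let L = Uᵀ. Then U⁻¹ = (L⁻¹)ᵀ, i.e., the inverse of the transpose equals the transpose of the inverse for triangular Toeplitz matrices. -/
/-!
Every Toeplitz matrix `A` is persymmetric: `Aᵀ = J * A * J` for the reversal permutation `J`.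
Transposition is not anti-multiplicative over a noncommutative ring, but conjugation by `J` is
multiplicative, so `Uᵀ * (U⁻¹)ᵀ = J * U * U⁻¹ * J = 1` as soon as `U⁻¹` is Toeplitz as well.
This is where triangularity enters: the upper-triangular Toeplitz matrices are exactly those
commuting with the nilpotent shift `N`, and the inverse of a matrix commuting with `N` commutes
with `N`.
-/

open Matrix

namespace Matrix

variable {R : Type*} {m : ℕ}

def IsToeplitz (A : Matrix (Fin m) (Fin m) R) : Prop :=
  ∀ i j k l : Fin m, (i : ℕ) + l = k + j → A i j = A k l

theorem IsToeplitz.transpose_eq_submatrix_rev {A : Matrix (Fin m) (Fin m) R}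
    (hA : IsToeplitz A) : Aᵀ = A.submatrix Fin.rev Fin.rev := by
  ext i j
  exact hA _ _ _ _ (by simp only [Fin.val_rev]; omega)

theorem transpose_mul_transpose_eq_submatrix_rev [NonUnitalNonAssocSemiring R]
    {A B : Matrix (Fin m) (Fin m) R} (hA : Aᵀ = A.submatrix Fin.rev Fin.rev)
    (hB : Bᵀ = B.submatrix Fin.rev Fin.rev) :
    Aᵀ * Bᵀ = (A * B).submatrix Fin.rev Fin.rev := by
  rw [hA, hB, submatrix_mul _ _ _ _ _ Fin.rev_bijective]

variable (R m) in
def shiftMatrix [Zero R] [One R] : Matrix (Fin m) (Fin m) R :=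
  of fun i j => if (i : ℕ) + 1 = j then 1 else 0

variable [NonAssocSemiring R]

theorem shiftMatrix_mul_apply (A : Matrix (Fin m) (Fin m) R) (i j : Fin m) :
    (shiftMatrix R m * A) i j = if h : (i : ℕ) + 1 < m then A ⟨i + 1, h⟩ j else 0 := by
  rw [mul_apply]
  split_ifs with h
  · refine (Fintype.sum_eq_single ⟨i + 1, h⟩ fun k hk => ?_).trans (by simp [shiftMatrix])
    rw [shiftMatrix, of_apply, if_neg fun hik => hk (Fin.ext hik.symm), zero_mul]
  · refine Finset.sum_eq_zero fun k _ => ?_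
    rw [shiftMatrix, of_apply, if_neg (by omega), zero_mul]

theorem mul_shiftMatrix_apply (A : Matrix (Fin m) (Fin m) R) (i j : Fin m) :
    (A * shiftMatrix R m) i j = if h : 0 < (j : ℕ) then A i ⟨j - 1, by omega⟩ else 0 := by
  rw [mul_apply]
  split_ifs with h
  · refine (Fintype.sum_eq_single ⟨j - 1, by omega⟩ fun k hk => ?_).trans ?_
    · rw [shiftMatrix, of_apply, if_neg fun hkj => hk (Fin.ext (by simp only; omega)), mul_zero]
    · rw [shiftMatrix, of_apply, if_pos (by simp only; omega), mul_one]
  · refine Finset.sum_eq_zero fun k _ => ?_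
    rw [shiftMatrix, of_apply, if_neg (by omega), mul_zero]

theorem IsToeplitz.commute_shiftMatrix {A : Matrix (Fin m) (Fin m) R} (hA : IsToeplitz A)
    (hA' : A.BlockTriangular id) : Commute A (shiftMatrix R m) := by
  ext i j
  rw [mul_shiftMatrix_apply, shiftMatrix_mul_apply]
  split_ifs with hj hi hi
  · exact hA _ _ _ _ (by simp only; omega)
  · exact hA' (by simp only [id_eq, Fin.lt_def]; omega)
  · exact (hA' (by simp only [id_eq, Fin.lt_def]; omega)).symm
  · rfl

theorem apply_eq_of_commute_shiftMatrix_of_val_eq_add_one {A : Matrix (Fin m) (Fin m) R}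
    (hA : Commute A (shiftMatrix R m)) {i j k l : Fin m} (hk : (k : ℕ) = i + 1)
    (hl : (l : ℕ) = j + 1) : A k l = A i j := by
  have h := congr_fun₂ hA.eq i l
  rw [mul_shiftMatrix_apply, shiftMatrix_mul_apply, dif_pos (by omega), dif_pos (by omega)] at h
  convert h.symm using 2
  · exact Fin.ext hk
  · exact Fin.ext (show (j : ℕ) = l - 1 by omega)

theorem apply_eq_of_commute_shiftMatrix_of_val_eq_add {A : Matrix (Fin m) (Fin m) R}
    (hA : Commute A (shiftMatrix R m)) (d : ℕ) {i j k l : Fin m} (hk : (k : ℕ) = i + d)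
    (hl : (l : ℕ) = j + d) : A k l = A i j := by
  induction d generalizing k l with
  | zero => rw [Fin.ext hk, Fin.ext hl]
  | succ d ih =>
    exact (apply_eq_of_commute_shiftMatrix_of_val_eq_add_one hA (i := ⟨i + d, by omega⟩)
      (j := ⟨j + d, by omega⟩) (by simp only; omega) (by simp only; omega)).trans (ih rfl rfl)

theorem isToeplitz_of_commute_shiftMatrix {A : Matrix (Fin m) (Fin m) R}
    (hA : Commute A (shiftMatrix R m)) : IsToeplitz A := by
  intro i j k l h
  rcases le_total (i : ℕ) k with hik | hki
  · exact (apply_eq_of_commute_shiftMatrix_of_val_eq_add hA (k - i) (i := i) (k := k)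
      (by omega) (by omega)).symm
  · exact apply_eq_of_commute_shiftMatrix_of_val_eq_add hA (i - k) (i := k) (k := i)
      (by omega) (by omega)

end Matrix

/-- For an invertible upper-triangular Toeplitz matrix U over a
(possibly noncommutative) ring with unity, with L = Uᵀ, one has U⁻¹ = (L⁻¹)ᵀ. -/
theorem toeplitz_triangular_inverse_transpose {R : Type*} [Ring R] {m : ℕ}
    (U : Matrix (Fin m) (Fin m) R)
    (htoep : ∀ i j k l : Fin m, (i : ℕ) + (l : ℕ) = (k : ℕ) + (j : ℕ) → U i j = U k l)
    (htri : ∀ i j : Fin m, (j : ℕ) < (i : ℕ) → U i j = 0)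
    (hU : Invertible U) (hL : Invertible Uᵀ) :
    ⅟U = (⅟(Uᵀ))ᵀ := by
  have hU' : IsToeplitz U := htoep
  have hinv : IsToeplitz (⅟U) :=
    isToeplitz_of_commute_shiftMatrix (hU'.commute_shiftMatrix htri).invOf_left
  have hright : Uᵀ * (⅟U)ᵀ = 1 := by
    rw [transpose_mul_transpose_eq_submatrix_rev hU'.transpose_eq_submatrix_rev
      hinv.transpose_eq_submatrix_rev, mul_invOf_self, submatrix_one _ Fin.rev_injective]
  rw [invOf_eq_right_inv hright, transpose_transpose]
end

section
/- Let p and v be scalar polynomials over an algebraically closed field, with p of degree k ≥ 1 and v nonzero of degree at most k-1. If p and v have no common root, then there exists λ such that the Bézout matrix B(p, (x-λ)v) (with both arguments regarded as grade-k polynomials) is nonsingular. -/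
/-!
Dividing by `x - y`, the Bézoutian of `p` and `q` equals `p(y) Dq(x, y) - q(y) Dp(x, y)`, where
`Df = (f(x) - f(y)) / (x - y)`; it is symmetric in `x` and `y`, so its degree in each variable is
below `k`. A kernel vector `c` of the Bézout matrix, read as `γ(x) = ∑ c_j x^j`, kills the
coefficient of `x^(k-1)` in `B(x, y) γ(x)`, that is `p W_q = q W_p` with
`W_f = [x^(k-1)] (Df(x, y) γ(x))`. When `p` and `q` are coprime, `p` divides `W_p`; but `W_p` is
nonzero of degree `< k = deg p`, its coefficient of `y^(deg γ)` being `lc p · lc γ`.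
For the theorem, take `λ` with `p(λ) ≠ 0`: then `p` and `(x - λ) v` have no common root.
-/

section
open Polynomial

theorem Finsupp.single_zero_add_single_one_eq_iff (d : Fin 2 →₀ ℕ) (a b : ℕ) :
    d = Finsupp.single 0 a + Finsupp.single 1 b ↔ d 0 = a ∧ d 1 = b := by
  constructor
  · rintro rfl
    simp
  · rintro ⟨h0, h1⟩
    ext i
    fin_cases i <;> simp [h0, h1]

theorem Finset.Nat.sum_antidiagonal_eq_sum_fin {M : Type*} [AddCommMonoid M] (n : ℕ)
    (g : ℕ × ℕ → M) : ∑ x ∈ antidiagonal n, g x = ∑ j : Fin (n + 1), g (n - j, j) := by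
  rw [← Finset.Nat.sum_antidiagonal_swap, Fin.sum_univ_eq_sum_range (fun j => g (n - j, j)),
    Finset.Nat.sum_antidiagonal_eq_sum_range_succ_mk]
  rfl

namespace Polynomial

section CommSemiring

variable {R : Type*} [CommSemiring R]

theorem coeff_coeff_mul_map_C (P : R[X][X]) (γ : R[X]) (n s : ℕ) :
    ((P * γ.map C).coeff n).coeff s =
      ∑ x ∈ Finset.HasAntidiagonal.antidiagonal n, (P.coeff x.1).coeff s * γ.coeff x.2 := by
  rw [coeff_mul, finsetSum_coeff]
  simp only [coeff_map, coeff_mul_C]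

noncomputable def toBivariate : MvPolynomial (Fin 2) R →ₐ[R] R[X][X] :=
  MvPolynomial.aeval ![X, C X]

theorem toBivariate_X_zero :
    toBivariate (MvPolynomial.X 0 : MvPolynomial (Fin 2) R) = X :=
  MvPolynomial.aeval_X _ _

theorem toBivariate_X_one :
    toBivariate (MvPolynomial.X 1 : MvPolynomial (Fin 2) R) = C X :=
  MvPolynomial.aeval_X _ _

theorem coeff_coeff_toBivariate (B : MvPolynomial (Fin 2) R) (a b : ℕ) :
    ((toBivariate B).coeff a).coeff b = B.coeff (Finsupp.single 0 a + Finsupp.single 1 b) := by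
  induction B using MvPolynomial.induction_on' with
  | monomial u r =>
    have : toBivariate (MvPolynomial.monomial u r) = monomial (u 0) (monomial (u 1) r) := by
      simp [toBivariate, MvPolynomial.aeval_monomial, Fin.prod_univ_two,
        ← C_mul_X_pow_eq_monomial]
      ring
    simp only [this, MvPolynomial.coeff_monomial, Finsupp.single_zero_add_single_one_eq_iff]
    by_cases h : u 0 = a <;> simp [h, coeff_monomial]
  | add B₁ B₂ h₁ h₂ => simp [h₁, h₂]

theorem aeval_C_X (f : R[X]) : aeval (C X : R[X][X]) f = C f := by
  rw [← algebraMap_eq, aeval_algebraMap_apply, aeval_X_left_apply]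

end CommSemiring

variable {R : Type*} [CommRing R]

/-- The divided difference `(f(x) - f(y)) / (x - y)`, with `x` the outer and `y` the inner
variable. -/
noncomputable def divDiff (f : R[X]) : R[X][X] := (f.map C - C f) /ₘ (X - C X)

theorem X_sub_C_mul_divDiff (f : R[X]) : (X - C X) * divDiff f = f.map C - C f :=
  mul_divByMonic_eq_iff_isRoot.mpr (by simp [eval_map])

theorem coeff_divDiff (f : R[X]) (n : ℕ) :
    (divDiff f).coeff n = C (f.coeff (n + 1)) + X * (divDiff f).coeff (n + 1) := by
  have h := congrArg (coeff · (n + 1)) (X_sub_C_mul_divDiff f)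
  simp only [sub_mul, coeff_sub, coeff_X_mul, coeff_C_mul, coeff_map, coeff_C_succ,
    sub_zero] at h
  rw [← h]
  ring

theorem coeff_coeff_divDiff (f : R[X]) (m s : ℕ) :
    ((divDiff f).coeff m).coeff s = f.coeff (m + s + 1) := by
  induction s generalizing m with
  | zero => simp [coeff_divDiff f m]
  | succ s ih => rw [coeff_divDiff, coeff_add, coeff_C_succ, coeff_X_mul, ih]; ring_nf

theorem coeff_divDiff_eq_zero {f : R[X]} {m : ℕ} (h : f.natDegree ≤ m) :
    (divDiff f).coeff m = 0 := by
  ext s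
  rw [coeff_coeff_divDiff, coeff_zero, coeff_eq_zero_of_natDegree_lt (by omega)]

theorem degree_coeff_divDiff_mul_map_C_lt {f : R[X]} {k : ℕ} (hf : f.natDegree ≤ k)
    (γ : R[X]) : ((divDiff f * γ.map C).coeff (k - 1)).degree < k := by
  refine degree_lt_iff_coeff_zero _ _ |>.mpr fun m hm => ?_
  rw [coeff_coeff_mul_map_C]
  refine Finset.sum_eq_zero fun x _ => ?_
  rw [coeff_coeff_divDiff, coeff_eq_zero_of_natDegree_lt (by omega), zero_mul]

theorem coeff_divDiff_mul_map_C_ne_zero [NoZeroDivisors R] {f γ : R[X]} {k : ℕ}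
    (hf : f.natDegree = k) (hγ : γ.degree < k) (hγ0 : γ ≠ 0) :
    (divDiff f * γ.map C).coeff (k - 1) ≠ 0 := by
  set d := γ.natDegree
  have hd : d < k := (natDegree_lt_iff_degree_lt hγ0).mpr hγ
  have hf0 : f ≠ 0 := by rintro rfl; simp at hf; omega
  have hmem : (k - 1 - d, d) ∈ Finset.HasAntidiagonal.antidiagonal (k - 1) := by
    rw [Finset.HasAntidiagonal.mem_antidiagonal]; omega
  have hcoeff : ((divDiff f * γ.map C).coeff (k - 1)).coeff d =
      f.leadingCoeff * γ.leadingCoeff := by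
    rw [coeff_coeff_mul_map_C, Finset.sum_eq_single_of_mem _ hmem]
    · rw [coeff_coeff_divDiff, show k - 1 - d + d + 1 = f.natDegree by omega]
      rfl
    · rintro ⟨a, b⟩ hab hne
      rw [Finset.HasAntidiagonal.mem_antidiagonal] at hab
      rw [coeff_coeff_divDiff]
      rcases lt_or_ge d b with hb | hb
      · rw [coeff_eq_zero_of_natDegree_lt hb, mul_zero]
      · rw [coeff_eq_zero_of_natDegree_lt (p := f) (by grind), zero_mul]
  intro h
  rw [h, coeff_zero] at hcoeff
  exact mul_ne_zero (leadingCoeff_ne_zero.mpr hf0) (leadingCoeff_ne_zero.mpr hγ0) hcoeff.symm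

end Polynomial

section Bezoutian

variable {R : Type*} [CommRing R]

def IsBezoutian (p q : R[X]) (B : MvPolynomial (Fin 2) R) : Prop :=
  (MvPolynomial.X 0 - MvPolynomial.X 1) * B =
    aeval (MvPolynomial.X 1) p * aeval (MvPolynomial.X 0) q -
      aeval (MvPolynomial.X 1) q * aeval (MvPolynomial.X 0) p

/-- Entry `(i, j)` is the coefficient of `y ^ (k - 1 - i) * x ^ (k - 1 - j)`, where `x = X 0` and
`y = X 1`: the paper's `b_{ij}` with indices starting at `0`. -/
noncomputable def bezoutMatrix (k : ℕ) (B : MvPolynomial (Fin 2) R) : Matrix (Fin k) (Fin k) R :=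
  Matrix.of fun i j => B.coeff (Finsupp.single 0 (k - 1 - j) + Finsupp.single 1 (k - 1 - i))

namespace IsBezoutian

variable {p q : R[X]} {B : MvPolynomial (Fin 2) R}

theorem rename_swap [IsDomain R] (hB : IsBezoutian p q B) :
    MvPolynomial.rename (Equiv.swap 0 1) B = B := by
  unfold IsBezoutian at hB
  have h := congrArg (MvPolynomial.rename (Equiv.swap (0 : Fin 2) 1)) hB
  simp only [map_mul, map_sub, ← aeval_algHom_apply, MvPolynomial.rename_X,
    Equiv.swap_apply_left, Equiv.swap_apply_right] at h
  have hX : (MvPolynomial.X 0 - MvPolynomial.X 1 : MvPolynomial (Fin 2) R) ≠ 0 :=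
    sub_ne_zero.mpr (MvPolynomial.X_injective.ne (by decide))
  refine mul_left_cancel₀ hX ?_
  linear_combination -h - hB

theorem coeff_comm [IsDomain R] (hB : IsBezoutian p q B) (a b : ℕ) :
    B.coeff (Finsupp.single 0 a + Finsupp.single 1 b) =
      B.coeff (Finsupp.single 0 b + Finsupp.single 1 a) := by
  have h := MvPolynomial.coeff_rename_mapDomain (Equiv.swap (0 : Fin 2) 1) (Equiv.injective _) B
    (Finsupp.single 0 a + Finsupp.single 1 b)
  rwa [hB.rename_swap, Finsupp.mapDomain_add, Finsupp.mapDomain_single, Finsupp.mapDomain_single,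
    Equiv.swap_apply_left, Equiv.swap_apply_right, add_comm, eq_comm] at h

theorem toBivariate_eq [IsDomain R] (hB : IsBezoutian p q B) :
    toBivariate B = C p * divDiff q - C q * divDiff p := by
  have h := congrArg toBivariate hB
  simp only [map_mul, map_sub, ← aeval_algHom_apply, toBivariate_X_zero, toBivariate_X_one,
    aeval_C_X, aeval_X_left_eq_map] at h
  refine mul_left_cancel₀ (X_sub_C_ne_zero (X : R[X])) ?_
  linear_combination h - C p * X_sub_C_mul_divDiff q + C q * X_sub_C_mul_divDiff p

theorem coeff_eq_zero_of_le_left [IsDomain R] (hB : IsBezoutian p q B) {k a : ℕ}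
    (hp : p.natDegree ≤ k) (hq : q.natDegree ≤ k) (ha : k ≤ a) (b : ℕ) :
    B.coeff (Finsupp.single 0 a + Finsupp.single 1 b) = 0 := by
  rw [← coeff_coeff_toBivariate, hB.toBivariate_eq, coeff_sub, coeff_C_mul, coeff_C_mul,
    coeff_divDiff_eq_zero (hq.trans ha), coeff_divDiff_eq_zero (hp.trans ha)]
  simp

theorem coeff_eq_zero_of_le_right [IsDomain R] (hB : IsBezoutian p q B) {k b : ℕ}
    (hp : p.natDegree ≤ k) (hq : q.natDegree ≤ k) (a : ℕ) (hb : k ≤ b) :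
    B.coeff (Finsupp.single 0 a + Finsupp.single 1 b) = 0 := by
  rw [hB.coeff_comm]
  exact hB.coeff_eq_zero_of_le_left hp hq hb a

end IsBezoutian

theorem bezoutMatrix_mulVec_apply {k : ℕ} (B : MvPolynomial (Fin 2) R) (γ : R[X]) (i : Fin k) :
    (bezoutMatrix k B).mulVec (fun j => γ.coeff j) i =
      ((toBivariate B * γ.map C).coeff (k - 1)).coeff (k - 1 - i) := by
  obtain _ | n := k
  · exact i.elim0
  rw [coeff_coeff_mul_map_C, Nat.add_sub_cancel, Finset.Nat.sum_antidiagonal_eq_sum_fin]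
  simp only [coeff_coeff_toBivariate, Matrix.mulVec, dotProduct, bezoutMatrix, Matrix.of_apply,
    add_tsub_cancel_right]

theorem IsBezoutian.det_bezoutMatrix_ne_zero {F : Type*} [Field F] {p q : F[X]}
    {B : MvPolynomial (Fin 2) F} {k : ℕ} (hB : IsBezoutian p q B) (hp : p.natDegree = k)
    (hq : q.natDegree ≤ k) (hpq : IsCoprime p q) : (bezoutMatrix k B).det ≠ 0 := by
  intro hdet
  obtain ⟨c, hc0, hc⟩ := Matrix.exists_mulVec_eq_zero_iff.mpr hdet
  set γ : F[X] := ((degreeLTEquiv F k).symm c : F[X])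
  have hγ : γ.degree < k := mem_degreeLT.mp ((degreeLTEquiv F k).symm c).2
  have hγc : (fun j : Fin k => γ.coeff j) = c := (degreeLTEquiv F k).apply_symm_apply c
  have hγ0 : γ ≠ 0 := fun h => hc0 (by rw [← hγc, h]; rfl)
  have hcontr : (toBivariate B * γ.map C).coeff (k - 1) = 0 := by
    ext s
    rw [coeff_zero]
    rcases lt_or_ge s k with hs | hs
    · have := congrFun hc ⟨k - 1 - s, by omega⟩
      rwa [← hγc, bezoutMatrix_mulVec_apply, show k - 1 - (k - 1 - s) = s by omega] at this
    · rw [coeff_coeff_mul_map_C]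
      refine Finset.sum_eq_zero fun x _ => ?_
      rw [coeff_coeff_toBivariate, hB.coeff_eq_zero_of_le_right hp.le hq _ hs, zero_mul]
  rw [hB.toBivariate_eq, sub_mul, coeff_sub, mul_assoc, mul_assoc, coeff_C_mul, coeff_C_mul,
    sub_eq_zero] at hcontr
  set W := (divDiff p * γ.map C).coeff (k - 1)
  have hW0 : W ≠ 0 := coeff_divDiff_mul_map_C_ne_zero hp hγ hγ0
  have hWdeg : W.natDegree < p.natDegree :=
    hp ▸ (natDegree_lt_iff_degree_lt hW0).mpr (degree_coeff_divDiff_mul_map_C_lt hp.le γ)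
  exact hW0 (eq_zero_of_dvd_of_natDegree_lt (hpq.dvd_of_dvd_mul_left ⟨_, hcontr.symm⟩) hWdeg)

end Bezoutian

end

open MvPolynomial

theorem exists_lambda_bezout_nonsingular_general {F : Type*} [Field F] [IsAlgClosed F]
    (k : ℕ) (hk : 1 ≤ k) (p v : Polynomial F) (hp : p.degree = (k : ℕ))
    (hvd : v.degree ≤ ((k - 1 : ℕ) : ℕ))
    (hcommon : ∀ z : F, p.eval z = 0 → v.eval z ≠ 0) :
    ∃ lam : F, ∀ B : MvPolynomial (Fin 2) F,
      (X 0 - X 1 : MvPolynomial (Fin 2) F) * B =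
          Polynomial.aeval (X 1 : MvPolynomial (Fin 2) F) p *
              Polynomial.aeval (X 0 : MvPolynomial (Fin 2) F)
                ((Polynomial.X - Polynomial.C lam) * v) -
            Polynomial.aeval (X 1 : MvPolynomial (Fin 2) F)
                ((Polynomial.X - Polynomial.C lam) * v) *
              Polynomial.aeval (X 0 : MvPolynomial (Fin 2) F) p →
        (Matrix.of fun i j : Fin k => MvPolynomial.coeff
            (Finsupp.single (0 : Fin 2) (k - 1 - (j : ℕ)) +
              Finsupp.single (1 : Fin 2) (k - 1 - (i : ℕ))) B).det ≠ 0 := by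
  have hpk : p.natDegree = k := Polynomial.natDegree_eq_of_degree_eq_some hp
  have hp0 : p ≠ 0 := by rintro rfl; simp at hp
  obtain ⟨lam, hlam⟩ : ∃ lam, p.eval lam ≠ 0 := by
    by_contra! h
    exact hp0 (Polynomial.zero_of_eval_zero p h)
  refine ⟨lam, fun B hB => IsBezoutian.det_bezoutMatrix_ne_zero hB hpk ?_ ?_⟩
  · have hv := Polynomial.natDegree_le_of_degree_le hvd
    refine Polynomial.natDegree_mul_le.trans ?_
    rw [Polynomial.natDegree_X_sub_C]
    omega
  · refine (Polynomial.isCoprime_iff_aeval_ne_zero_of_isAlgClosed F F p _).mpr fun z => ?_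
    simp only [Polynomial.coe_aeval_eq_eval, Polynomial.eval_mul, Polynomial.eval_sub,
      Polynomial.eval_X, Polynomial.eval_C, or_iff_not_imp_left, not_not]
    intro hz
    exact mul_ne_zero (sub_ne_zero.mpr (by rintro rfl; exact hlam hz)) (hcommon z hz)

/-- Over an algebraically closed field, if p (degree k ≥ 1) and v
(nonzero, degree ≤ k-1) have no common root, then there exists λ such that the
k×k Bézout matrix B(p,(x-λ)v) (grade k) is nonsingular. -/
theorem exists_lambda_bezout_nonsingular {F : Type*} [Field F] [IsAlgClosed F]
    (k : ℕ) (hk : 1 ≤ k) (p v : Polynomial F) (hp : p.degree = (k : ℕ))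
    (hv : v ≠ 0) (hvd : v.degree ≤ ((k - 1 : ℕ) : ℕ))
    (hcommon : ∀ z : F, p.eval z = 0 → v.eval z ≠ 0) :
    ∃ lam : F, ∀ B : MvPolynomial (Fin 2) F,
      (X 0 - X 1 : MvPolynomial (Fin 2) F) * B =
          Polynomial.aeval (X 1 : MvPolynomial (Fin 2) F) p *
              Polynomial.aeval (X 0 : MvPolynomial (Fin 2) F)
                ((Polynomial.X - Polynomial.C lam) * v) -
            Polynomial.aeval (X 1 : MvPolynomial (Fin 2) F)
                ((Polynomial.X - Polynomial.C lam) * v) *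
              Polynomial.aeval (X 0 : MvPolynomial (Fin 2) F) p →
        (Matrix.of fun i j : Fin k => MvPolynomial.coeff
            (Finsupp.single (0 : Fin 2) (k - 1 - (j : ℕ)) +
              Finsupp.single (1 : Fin 2) (k - 1 - (i : ℕ))) B).det ≠ 0 :=
  exists_lambda_bezout_nonsingular_general k hk p v hp hvd hcommon
end

section
/- Let P(λ) be a regular n×n matrix polynomial (det P not identically zero) over a field F, and suppose λ₀ ∈ F̄ and a nonzero vector w satisfy P(λ₀)w = 0 and v(λ₀) = 0 for a scalar polynomial v of degree ≤ k-1. Then for every λ, the Bézout block matrix B(P, (x-λ)vI) (i.e., the DL(P) pencil with ansatz v evaluated at λ) is singular: the block vector [λ₀^{k-1}w; λ₀^{k-2}w; ...; w] lies in its kernel. -/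
open MvPolynomial

section Aux
variable {K : Type*} [Field K]

private abbrev A1 (K : Type*) [Field K] := MvPolynomial (Fin 1) K

private lemma key0 (p : Polynomial K) :
    MvPolynomial.finSuccEquiv K 1 (Polynomial.aeval (X 0) p) = p.map (algebraMap K (A1 K)) := by
  rw [← Polynomial.aeval_algHom_apply, finSuccEquiv_X_zero]
  rw [show (Polynomial.X : Polynomial (A1 K)) = Polynomial.mapAlgHom (Algebra.ofId K (A1 K)) Polynomial.X by simp]
  rw [Polynomial.aeval_algHom_apply, Polynomial.aeval_X_left_apply]
  rfl

private lemma key1 (p : Polynomial K) :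
    MvPolynomial.finSuccEquiv K 1 (Polynomial.aeval (X 1) p)
      = Polynomial.C (Polynomial.aeval (X 0 : A1 K) p) := by
  rw [← Polynomial.aeval_algHom_apply, show ((1 : Fin 2)) = Fin.succ 0 from rfl, finSuccEquiv_X_succ]
  exact Polynomial.aeval_algHom_apply (Polynomial.CAlgHom (R := K)) (X 0) p

private lemma keyX1 :
    MvPolynomial.finSuccEquiv K 1 (X 1 : MvPolynomial (Fin 2) K) = Polynomial.C (X 0) := by
  rw [show ((1 : Fin 2)) = Fin.succ 0 from rfl, finSuccEquiv_X_succ]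

private lemma keyC (a : K) :
    MvPolynomial.finSuccEquiv K 1 (MvPolynomial.C a) = Polynomial.C (MvPolynomial.C a) := by
  rw [show (MvPolynomial.C a : MvPolynomial (Fin 2) K) = algebraMap K _ a from rfl, AlgEquiv.commutes]
  rfl

private lemma keyCne (a : K) : (MvPolynomial.C a - X 0 : A1 K) ≠ 0 := by
  intro h
  have := congrArg (MvPolynomial.coeff (Finsupp.single 0 1)) h
  rw [MvPolynomial.coeff_sub, MvPolynomial.coeff_C, MvPolynomial.coeff_X,
    if_neg (by simp [eq_comm])] at this
  simp at this

private lemma keyCons (d e : ℕ) : (Finsupp.cons d (Finsupp.single (0 : Fin 1) e) : Fin 2 →₀ ℕ) =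
    Finsupp.single (0 : Fin 2) d + Finsupp.single (1 : Fin 2) e := by
  ext a
  match a with
  | 0 => simp [Finsupp.cons_zero]
  | ⟨1, h⟩ =>
    have h1 : (⟨1, h⟩ : Fin 2) = Fin.succ 0 := rfl
    rw [h1, Finsupp.cons_succ]
    simp [Fin.succ]

private lemma keyaev (lam0 : K) (p : Polynomial K) :
    Polynomial.aeval (MvPolynomial.C lam0 : A1 K) p = MvPolynomial.C (Polynomial.aeval lam0 p) := by
  rw [show (MvPolynomial.C lam0 : A1 K) = (Algebra.ofId K (A1 K)) lam0 from rfl,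
    Polynomial.aeval_algHom_apply]
  rfl

private lemma keyevmap (lam0 : K) (p : Polynomial K) :
    (p.map (algebraMap K (A1 K))).eval (MvPolynomial.C lam0)
      = MvPolynomial.C (Polynomial.aeval lam0 p) := by
  rw [Polynomial.eval_map, ← Polynomial.aeval_def, keyaev]

private lemma auxmain {n k : ℕ} (hk : 1 ≤ k)
    (Q : Matrix (Fin n) (Fin n) (Polynomial K)) (hQ : ∀ s t, (Q s t).natDegree ≤ k)
    (vK : Polynomial K) (hv : vK.natDegree ≤ k - 1)
    (lam lam0 : K) (w : Fin n → K)
    (hPw : ∀ s, ∑ t, Polynomial.aeval lam0 (Q s t) * w t = 0)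
    (hv0 : Polynomial.aeval lam0 vK = 0)
    (Bm : Matrix (Fin n) (Fin n) (MvPolynomial (Fin 2) K))
    (hBm : ∀ s t, (X 0 - X 1 : MvPolynomial (Fin 2) K) * Bm s t =
        ((X 0 - C lam) * Polynomial.aeval (X 0) vK) * (Polynomial.aeval (X 1) (Q s t))
      - ((X 1 - C lam) * Polynomial.aeval (X 1) vK) * (Polynomial.aeval (X 0) (Q s t)))
    (e : ℕ) (s : Fin n) :
    ∑ d ∈ Finset.range k, ∑ t, MvPolynomial.coeff
      (Finsupp.single (0 : Fin 2) d + Finsupp.single (1 : Fin 2) e) (Bm s t)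
        * (lam0 ^ d * w t) = 0 := by
  classical
  set E := MvPolynomial.finSuccEquiv K 1 with hEdef
  -- entrywise equation after applying E
  have hE : ∀ t, (Polynomial.X - Polynomial.C (X 0 : A1 K)) * E (Bm s t) =
      ((Polynomial.X - Polynomial.C (MvPolynomial.C lam)) * (vK.map (algebraMap K (A1 K))))
          * Polynomial.C (Polynomial.aeval (X 0 : A1 K) (Q s t))
      - ((Polynomial.C (X 0 : A1 K) - Polynomial.C (MvPolynomial.C lam))
          * Polynomial.C (Polynomial.aeval (X 0 : A1 K) vK))
          * ((Q s t).map (algebraMap K (A1 K))) := by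
    intro t
    have h := congrArg E (hBm s t)
    rw [map_mul, map_sub, map_sub, map_mul, map_mul, map_mul, map_mul, map_sub, map_sub,
      finSuccEquiv_X_zero, key0, key0, key1, key1, keyC, keyX1] at h
    exact h
  -- degree bound
  have hBdeg : ∀ t, (E (Bm s t)).natDegree ≤ k - 1 := by
    intro t
    by_cases h0 : E (Bm s t) = 0
    · simp [h0]
    have hX : (Polynomial.X - Polynomial.C (X 0 : A1 K)) ≠ 0 := Polynomial.X_sub_C_ne_zero _
    have hdeg : ((Polynomial.X - Polynomial.C (X 0 : A1 K)) * E (Bm s t)).natDegree ≤ k := by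
      rw [hE t]
      refine le_trans (Polynomial.natDegree_sub_le _ _) (max_le ?_ ?_)
      · refine le_trans (Polynomial.natDegree_mul_le) ?_
        have h1 : ((Polynomial.X - Polynomial.C (MvPolynomial.C lam))
            * (vK.map (algebraMap K (A1 K)))).natDegree ≤ k := by
          refine le_trans (Polynomial.natDegree_mul_le) ?_
          have := le_trans (Polynomial.natDegree_map_le
            (f := algebraMap K (A1 K)) (p := vK)) hv
          rw [Polynomial.natDegree_X_sub_C]
          omega
        simpa using h1
      · refine le_trans (Polynomial.natDegree_mul_le) ?_
        have h2 := le_trans (Polynomial.natDegree_map_le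
          (f := algebraMap K (A1 K)) (p := Q s t)) (hQ s t)
        have h3 : ((Polynomial.C (X 0 : A1 K) - Polynomial.C (MvPolynomial.C lam))
            * Polynomial.C (Polynomial.aeval (X 0 : A1 K) vK)).natDegree = 0 := by
          rw [← Polynomial.C_sub, ← Polynomial.C_mul, Polynomial.natDegree_C]
        omega
    rw [Polynomial.natDegree_mul hX h0, Polynomial.natDegree_X_sub_C] at hdeg
    omega
  -- evaluation at C lam0
  have hEval : ∀ t, (MvPolynomial.C lam0 - X 0 : A1 K) * (E (Bm s t)).eval (MvPolynomial.C lam0)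
      = - (((X 0 : A1 K) - MvPolynomial.C lam) * Polynomial.aeval (X 0 : A1 K) vK)
          * MvPolynomial.C (Polynomial.aeval lam0 (Q s t)) := by
    intro t
    have h := congrArg (Polynomial.eval (MvPolynomial.C lam0)) (hE t)
    simp only [Polynomial.eval_mul, Polynomial.eval_sub, Polynomial.eval_X, Polynomial.eval_C,
      keyevmap] at h
    rw [hv0, map_zero, mul_zero, zero_mul, zero_sub] at h
    rw [h]
    ring
  -- the summed kernel identity
  have hsum : ∑ t, (E (Bm s t)).eval (MvPolynomial.C lam0) * MvPolynomial.C (w t) = 0 := by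
    have h1 : (MvPolynomial.C lam0 - X 0 : A1 K)
        * (∑ t, (E (Bm s t)).eval (MvPolynomial.C lam0) * MvPolynomial.C (w t)) = 0 := by
      rw [Finset.mul_sum]
      have h2 : ∀ t : Fin n, (MvPolynomial.C lam0 - X 0 : A1 K)
          * ((E (Bm s t)).eval (MvPolynomial.C lam0) * MvPolynomial.C (w t))
          = - (((X 0 : A1 K) - MvPolynomial.C lam) * Polynomial.aeval (X 0 : A1 K) vK)
            * MvPolynomial.C (Polynomial.aeval lam0 (Q s t) * w t) := by
        intro t
        rw [← mul_assoc, hEval t, map_mul]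
        ring
      rw [Finset.sum_congr rfl fun t _ => h2 t, ← Finset.mul_sum, ← map_sum, hPw s,
        map_zero, mul_zero]
    exact (mul_eq_zero.mp h1).resolve_left (keyCne lam0)
  -- coefficient extraction
  have hco : ∀ t, MvPolynomial.coeff (Finsupp.single (0 : Fin 1) e)
      ((E (Bm s t)).eval (MvPolynomial.C lam0))
      = ∑ d ∈ Finset.range k, MvPolynomial.coeff
          (Finsupp.single (0 : Fin 2) d + Finsupp.single (1 : Fin 2) e) (Bm s t) * lam0 ^ d := by
    intro t
    have hlt : (E (Bm s t)).natDegree < k := lt_of_le_of_lt (hBdeg t) (by omega)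
    rw [Polynomial.eval_eq_sum_range' hlt, MvPolynomial.coeff_sum]
    refine Finset.sum_congr rfl fun d _ => ?_
    rw [← map_pow, mul_comm, MvPolynomial.coeff_C_mul, mul_comm]
    congr 1
    rw [hEdef, finSuccEquiv_coeff_coeff, keyCons]
  -- finish
  have hstep : (∑ d ∈ Finset.range k, ∑ t, MvPolynomial.coeff
      (Finsupp.single (0 : Fin 2) d + Finsupp.single (1 : Fin 2) e) (Bm s t) * (lam0 ^ d * w t))
      = ∑ t, MvPolynomial.coeff (Finsupp.single (0 : Fin 1) e)
          ((E (Bm s t)).eval (MvPolynomial.C lam0)) * w t := by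
    rw [Finset.sum_comm]
    refine Finset.sum_congr rfl fun t _ => ?_
    rw [hco t, Finset.sum_mul]
    exact Finset.sum_congr rfl fun d _ => by ring
  have hstep2 : (∑ t, MvPolynomial.coeff (Finsupp.single (0 : Fin 1) e)
      ((E (Bm s t)).eval (MvPolynomial.C lam0)) * w t)
      = MvPolynomial.coeff (Finsupp.single (0 : Fin 1) e)
        (∑ t, (E (Bm s t)).eval (MvPolynomial.C lam0) * MvPolynomial.C (w t)) := by
    rw [MvPolynomial.coeff_sum]
    exact Finset.sum_congr rfl fun t _ => by
      rw [mul_comm ((E (Bm s t)).eval (MvPolynomial.C lam0)) _, MvPolynomial.coeff_C_mul,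
        mul_comm]
  rw [hstep, hstep2, hsum]
  simp

end Aux

open MvPolynomial

/-- If P is a regular matrix polynomial of degree k over F, λ₀ (in the
algebraic closure of F) and a nonzero vector w satisfy P(λ₀)w = 0, and v(λ₀) = 0 for a
scalar polynomial v of degree ≤ k-1, then for every λ the DL(P) pencil with ansatz v,
i.e. the Bézout block matrix of P and (x-λ)vI, is singular: the block vector
[λ₀^{k-1}w; ...; λ₀w; w] lies in its kernel. -/
theorem DL_singular_of_shared_eigenpair {F : Type*} [Field F] {n : ℕ} (k : ℕ) (hk : 1 ≤ k)
    (P : Polynomial (Matrix (Fin n) (Fin n) F))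
    (hP : P.degree = (k : ℕ))
    (hreg : (matPolyEquiv.symm P).det ≠ 0)
    (v : Polynomial F) (hv : v.degree ≤ ((k - 1 : ℕ) : ℕ))
    (lam0 : AlgebraicClosure F) (w : Fin n → AlgebraicClosure F) (hw : w ≠ 0)
    (hPw : ((matPolyEquiv.symm P).map
        (fun q => Polynomial.aeval lam0 (q.map (algebraMap F (AlgebraicClosure F))))).mulVec w = 0)
    (hv0 : Polynomial.aeval lam0 v = 0) :
    ∀ lam : AlgebraicClosure F,
      ∀ Bm : Matrix (Fin n) (Fin n) (MvPolynomial (Fin 2) (AlgebraicClosure F)),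
        ((X 0 - X 1 : MvPolynomial (Fin 2) (AlgebraicClosure F)) • Bm =
          ((X 0 - C lam) *
              Polynomial.aeval (X 0 : MvPolynomial (Fin 2) (AlgebraicClosure F))
                (v.map (algebraMap F (AlgebraicClosure F)))) •
            ((matPolyEquiv.symm P).map (fun q =>
              Polynomial.aeval (X 1 : MvPolynomial (Fin 2) (AlgebraicClosure F))
                (q.map (algebraMap F (AlgebraicClosure F))))) -
          ((X 1 - C lam) *
              Polynomial.aeval (X 1 : MvPolynomial (Fin 2) (AlgebraicClosure F))
                (v.map (algebraMap F (AlgebraicClosure F)))) •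
            ((matPolyEquiv.symm P).map (fun q =>
              Polynomial.aeval (X 0 : MvPolynomial (Fin 2) (AlgebraicClosure F))
                (q.map (algebraMap F (AlgebraicClosure F)))))) →
        ∀ i : Fin k,
          (∑ j : Fin k,
            (Matrix.of fun s t : Fin n => MvPolynomial.coeff
                (Finsupp.single (0 : Fin 2) (k - 1 - (j : ℕ)) +
                  Finsupp.single (1 : Fin 2) (k - 1 - (i : ℕ))) (Bm s t)).mulVec
              (lam0 ^ (k - 1 - (j : ℕ)) • w)) = 0 := by
  intro lam Bm hBm i
  classical
  set Q : Matrix (Fin n) (Fin n) (Polynomial (AlgebraicClosure F)) :=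
    Matrix.of fun s t => ((matPolyEquiv.symm P) s t).map (algebraMap F (AlgebraicClosure F)) with hQdef
  set vK : Polynomial (AlgebraicClosure F) := v.map (algebraMap F (AlgebraicClosure F)) with hvKdef
  have hQ : ∀ s t, (Q s t).natDegree ≤ k := by
    intro s t
    refine le_trans Polynomial.natDegree_map_le ?_
    rw [Polynomial.natDegree_le_iff_coeff_eq_zero]
    intro m hm
    rw [matPolyEquiv_symm_apply_coeff]
    have : P.coeff m = 0 := by
      apply Polynomial.coeff_eq_zero_of_degree_lt
      rw [hP]
      exact_mod_cast hm
    rw [this]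
    rfl
  have hvdeg : vK.natDegree ≤ k - 1 := by
    refine le_trans Polynomial.natDegree_map_le ?_
    exact Polynomial.natDegree_le_iff_degree_le.mpr hv
  have hPw' : ∀ s, ∑ t, Polynomial.aeval lam0 (Q s t) * w t = 0 := by
    intro s
    have := congrFun hPw s
    simpa [Matrix.mulVec, dotProduct, Matrix.map_apply, hQdef] using this
  have hv0' : Polynomial.aeval lam0 vK = 0 := by
    rw [hvKdef, Polynomial.aeval_map_algebraMap]
    exact hv0
  have hBm' : ∀ s t, (X 0 - X 1 : MvPolynomial (Fin 2) (AlgebraicClosure F)) * Bm s t =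
      ((X 0 - C lam) * Polynomial.aeval (X 0) vK) * (Polynomial.aeval (X 1) (Q s t))
    - ((X 1 - C lam) * Polynomial.aeval (X 1) vK) * (Polynomial.aeval (X 0) (Q s t)) := by
    intro s t
    have := congrFun (congrFun hBm s) t
    simpa [Matrix.smul_apply, Matrix.sub_apply, Matrix.map_apply, smul_eq_mul, hQdef,
      hvKdef] using this
  funext s
  have hmain := auxmain hk Q hQ vK hvdeg lam lam0 w hPw' hv0' Bm hBm' (k - 1 - (i : ℕ)) s
  have hrev : ∀ j : Fin k, k - 1 - (j : ℕ) = ((Fin.rev j : Fin k) : ℕ) := by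
    intro j; rw [Fin.val_rev]; omega
  have hL : (∑ j : Fin k,
      (Matrix.of fun s t : Fin n => MvPolynomial.coeff
          (Finsupp.single (0 : Fin 2) (k - 1 - (j : ℕ)) +
            Finsupp.single (1 : Fin 2) (k - 1 - (i : ℕ))) (Bm s t)).mulVec
        (lam0 ^ (k - 1 - (j : ℕ)) • w)) s
      = ∑ j : Fin k, ∑ t, MvPolynomial.coeff
          (Finsupp.single (0 : Fin 2) (k - 1 - (j : ℕ)) +
            Finsupp.single (1 : Fin 2) (k - 1 - (i : ℕ))) (Bm s t)
          * (lam0 ^ (k - 1 - (j : ℕ)) * w t) := by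
    rw [Finset.sum_apply]
    refine Finset.sum_congr rfl fun j _ => ?_
    simp [Matrix.mulVec, dotProduct, Matrix.of_apply, Pi.smul_apply, smul_eq_mul,
      mul_comm, mul_left_comm]
  have hR : (∑ j : Fin k, ∑ t, MvPolynomial.coeff
          (Finsupp.single (0 : Fin 2) (k - 1 - (j : ℕ)) +
            Finsupp.single (1 : Fin 2) (k - 1 - (i : ℕ))) (Bm s t)
          * (lam0 ^ (k - 1 - (j : ℕ)) * w t))
      = ∑ d ∈ Finset.range k, ∑ t, MvPolynomial.coeff
          (Finsupp.single (0 : Fin 2) d +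
            Finsupp.single (1 : Fin 2) (k - 1 - (i : ℕ))) (Bm s t)
          * (lam0 ^ d * w t) := by
    simp_rw [hrev]
    rw [← Fin.sum_univ_eq_sum_range]
    exact Fintype.sum_bijective Fin.rev Fin.rev_bijective _ _ fun j => rfl
  rw [hL, hR, hmain]
  simp
end
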